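/- For all natural numbers n, the double sum over integers i, j of binom(2n, n+i) * binom(2n, n+j) * |i^3 - j^3| equals (4 n^2 (5n-2) / (4n-1)) * binom(4n-1, 2n-1). -/

import Mathlib

/-- Binomial coefficient `n.choose k` extended to an integer lower index,
vanishing when `k < 0` (and, as usual, when `k > n`). -/
def ichoose (n : ℕ) (k : ℤ) : ℤ := if 0 ≤ k then (n.choose k.toNat : ℤ) else 0

/-!
Shift indices to `k = n + i`, so the weights become `C(2n, k)`, and group the pairs `k < l` by
their gap `e = l - k`: the double sum is `2 ∑_{e ≥ 1} T(e)` with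
`T(e) = ∑_k C(2n, k) C(2n, k + e) ((k + e - n)³ - (k - n)³)`.
Expanding the cube in the falling factorials `k(k-1), k, 1` and using the shifted Vandermonde
identity `∑_k k^(r) C(a, k) C(b, k + e) = a^(r) C(a + b - r, a + e)`, `T(e)` becomes a combination
of `C(4n-2, 2n+e)`, `C(4n-1, 2n+e)` and `C(4n, 2n+e)`. Gosper's algorithm produces a cubic `p`
with `T(e) = F(e) - F(e+1)` for `F(e) = p(e) C(4n, 2n+e)`, so the sum telescopes to `2 F(1)`.
-/

open Finset

namespace Nat

theorem sum_choose_mul_choose_add (a b e : ℕ) :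
    ∑ k ∈ range (a + 1), a.choose k * b.choose (k + e) = (a + b).choose (a + e) := by
  rw [add_choose_eq,
    Finset.Nat.sum_antidiagonal_eq_sum_range_succ fun i j => a.choose i * b.choose j,
    ← sum_range_reflect, ← sum_subset (range_subset_range.2 (by omega : a + 1 ≤ (a + e).succ))]
  · refine sum_congr rfl fun k hk => ?_
    rw [mem_range] at hk
    rw [← choose_symm (by omega : k ≤ a)]
    congr 2; omega
  · intro i hi hi'
    simp only [mem_range] at hi hi'
    rw [choose_eq_zero_of_lt (by omega), zero_mul]

theorem descFactorial_add_mul_choose_add (r j c : ℕ) :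
    (r + j).descFactorial r * (r + c).choose (r + j) = (r + c).descFactorial r * c.choose j := by
  rw [descFactorial_eq_factorial_mul_choose, descFactorial_eq_factorial_mul_choose, mul_assoc,
    mul_comm ((r + j).choose r), choose_mul (by omega), mul_assoc]
  simp

theorem sum_descFactorial_mul_choose_mul_choose_add (a b e r : ℕ) :
    ∑ k ∈ range (a + 1), k.descFactorial r * a.choose k * b.choose (k + e) =
      a.descFactorial r * (a + b - r).choose (a + e) := by
  rcases lt_or_ge a r with har | hra
  · rw [descFactorial_eq_zero_iff_lt.2 har, zero_mul]
    refine sum_eq_zero fun k hk => ?_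
    rw [descFactorial_eq_zero_iff_lt.2 (by simp at hk; omega), zero_mul, zero_mul]
  obtain ⟨c, rfl⟩ := exists_add_of_le hra
  rw [add_assoc, sum_range_add, sum_eq_zero fun k hk => by
      rw [descFactorial_eq_zero_iff_lt.2 (mem_range.1 hk), zero_mul, zero_mul], zero_add]
  simp_rw [descFactorial_add_mul_choose_add, mul_assoc, ← mul_sum]
  rw [show r + c + b - r = c + b by omega, show r + c + e = c + (r + e) by omega,
    ← sum_choose_mul_choose_add]
  refine congrArg _ (sum_congr rfl fun j _ => ?_)
  congr 2; omega

section Cast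

variable {R : Type*} [Ring R]

theorem cast_choose_succ_right_mul (n k : ℕ) :
    (n.choose (k + 1) : R) * (k + 1) = n.choose k * (n - k) := by
  rcases le_or_gt k n with hkn | hnk
  · have h := congrArg (Nat.cast : ℕ → R) (choose_succ_right_eq n k)
    push_cast [hkn] at h
    exact h
  · simp [choose_eq_zero_of_lt hnk, choose_eq_zero_of_lt (by omega : n < k + 1)]

theorem cast_choose_mul_succ (n k : ℕ) :
    (n.choose k : R) * (n + 1) = (n + 1).choose k * (n + 1 - k) := by
  rcases le_or_gt k (n + 1) with hkn | hnk
  · have h := congrArg (Nat.cast : ℕ → R) (choose_mul_succ_eq n k)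
    push_cast [hkn] at h
    exact h
  · simp [choose_eq_zero_of_lt hnk, choose_eq_zero_of_lt (by omega : n < k)]

end Cast

end Nat

namespace Finset

theorem sum_range_sum_range_eq_two_mul_sum_Ico {R : Type*} [Semiring R] {f : ℕ → ℕ → R}
    (hsymm : ∀ k l, f k l = f l k) (hdiag : ∀ k, f k k = 0) (n : ℕ) :
    ∑ k ∈ range n, ∑ l ∈ range n, f k l = 2 * ∑ k ∈ range n, ∑ l ∈ Ico (k + 1) n, f k l := by
  induction n with
  | zero => simp
  | succ n ih =>
    have hrow : ∑ l ∈ range n, f n l = ∑ k ∈ range n, f k n := sum_congr rfl fun l _ => hsymm n l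
    have hcol : ∑ k ∈ range n, ∑ l ∈ Ico (k + 1) (n + 1), f k l =
        ∑ k ∈ range n, ∑ l ∈ Ico (k + 1) n, f k l + ∑ k ∈ range n, f k n := by
      rw [← sum_add_distrib]
      exact sum_congr rfl fun k hk => sum_Ico_succ_top (by simpa using hk) _
    simp only [sum_range_succ, sum_add_distrib, hdiag, add_zero, Ico_self, sum_empty, hrow,
      hcol, ih, mul_add, two_mul]
    abel

theorem sum_range_sum_Ico_eq_sum_range_sum_range_add {M : Type*} [AddCommMonoid M] {N : ℕ}
    {f : ℕ → ℕ → M} (hf : ∀ k l, N < l → f k l = 0) :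
    ∑ k ∈ range (N + 1), ∑ l ∈ Ico (k + 1) (N + 1), f k l =
      ∑ d ∈ range N, ∑ k ∈ range (N + 1), f k (k + (d + 1)) := by
  refine (sum_congr rfl fun k _ => ?_).trans sum_comm
  rw [sum_Ico_eq_sum_range]
  refine (sum_subset (range_subset_range.2 (by omega : N + 1 - (k + 1) ≤ N)) fun d _ hd =>
    hf _ _ ?_).trans ?_
  · simp at hd; omega
  · exact sum_congr rfl fun d _ => by rw [add_assoc, add_comm 1 d]

end Finset

theorem ichoose_natCast (N k : ℕ) : ichoose N k = N.choose k := by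
  simp [ichoose]

theorem finsum_ichoose_mul {R : Type*} [Ring R] (N : ℕ) (c : ℤ) (f : ℤ → R) :
    ∑ᶠ i : ℤ, (ichoose N (c + i) : R) * f i =
      ∑ k ∈ range (N + 1), (N.choose k : R) * f (k - c) := by
  have hinj : Set.InjOn (fun k : ℕ => (k : ℤ) - c) (range (N + 1)) := fun k _ l _ h => by
    simpa using h
  rw [finsum_eq_sum_of_support_subset _ (s := (range (N + 1)).image fun k : ℕ => (k : ℤ) - c),
    sum_image hinj]
  · simp [ichoose_natCast]
  · intro i hi
    have hc : 0 ≤ c + i := by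
      by_contra h
      simp [ichoose, h] at hi
    refine mem_image.2 ⟨(c + i).toNat, ?_, by omega⟩
    rw [mem_range]
    by_contra h
    simp [ichoose, hc, Nat.choose_eq_zero_of_lt (by omega : N < (c + i).toNat)] at hi

theorem finsum_finsum_ichoose_mul_ichoose {R : Type*} [CommRing R] (N : ℕ) (c : ℤ)
    (g : ℤ → ℤ → R) :
    ∑ᶠ i : ℤ, ∑ᶠ j : ℤ, (ichoose N (c + i) : R) * ichoose N (c + j) * g i j =
      ∑ k ∈ range (N + 1), ∑ l ∈ range (N + 1),
        (N.choose k : R) * N.choose l * g (k - c) (l - c) := by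
  have hinner (i : ℤ) : ∑ᶠ j : ℤ, (ichoose N (c + i) : R) * ichoose N (c + j) * g i j =
      (ichoose N (c + i) : R) * ∑ l ∈ range (N + 1), (N.choose l : R) * g i (l - c) :=
    calc _ = ∑ᶠ j : ℤ, (ichoose N (c + j) : R) * ((ichoose N (c + i) : R) * g i j) :=
          finsum_congr fun j => by ring
      _ = _ := by
          rw [finsum_ichoose_mul, mul_sum]
          exact sum_congr rfl fun l _ => by ring
  rw [finsum_congr hinner, finsum_ichoose_mul]
  simp_rw [mul_sum]
  exact sum_congr rfl fun k _ => sum_congr rfl fun l _ => by ring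

def cubeGapSum (n e : ℕ) : ℚ :=
  ∑ k ∈ range (2 * n + 1), ((2 * n).choose k : ℚ) * (2 * n).choose (k + e) *
    (((k : ℚ) + e - n) ^ 3 - ((k : ℚ) - n) ^ 3)

theorem cubeGapSum_eq (n e : ℕ) :
    cubeGapSum n e =
      3 * e * (2 * n * (2 * n - 1)) * (4 * n - 2).choose (2 * n + e) +
        (3 * e + 3 * e ^ 2 - 6 * n * e) * (2 * n) * (4 * n - 1).choose (2 * n + e) +
        (3 * e * n ^ 2 - 3 * e ^ 2 * n + e ^ 3) * (4 * n).choose (2 * n + e) := by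
  have hsum (r : ℕ) : ∑ k ∈ range (2 * n + 1),
      (k.descFactorial r : ℚ) * (2 * n).choose k * (2 * n).choose (k + e) =
        (2 * n).descFactorial r * (4 * n - r).choose (2 * n + e) := by
    rw [show 4 * n - r = 2 * n + 2 * n - r by omega]
    exact_mod_cast Nat.sum_descFactorial_mul_choose_mul_choose_add (2 * n) (2 * n) e r
  have hterm (k : ℕ) : ((2 * n).choose k : ℚ) * (2 * n).choose (k + e) *
      (((k : ℚ) + e - n) ^ 3 - ((k : ℚ) - n) ^ 3) =
        3 * e * ((k.descFactorial 2 : ℚ) * (2 * n).choose k * (2 * n).choose (k + e)) +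
        (3 * e + 3 * e ^ 2 - 6 * n * e) *
          ((k.descFactorial 1 : ℚ) * (2 * n).choose k * (2 * n).choose (k + e)) +
        (3 * e * n ^ 2 - 3 * e ^ 2 * n + e ^ 3) *
          ((k.descFactorial 0 : ℚ) * (2 * n).choose k * (2 * n).choose (k + e)) := by
    rw [Nat.cast_descFactorial_two, Nat.descFactorial_one, Nat.descFactorial_zero]
    push_cast
    ring
  simp only [cubeGapSum, hterm, sum_add_distrib, ← mul_sum]
  rw [hsum, hsum, hsum, Nat.cast_descFactorial_two, Nat.descFactorial_one, Nat.descFactorial_zero,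
    Nat.sub_zero]
  push_cast
  ring

def cubeGapPrimitive (n e : ℕ) : ℚ :=
  ((n - 1) * e ^ 3 + (2 * n - 1) * (n - 1) * e ^ 2 + 3 * n ^ 2 * e + 2 * n ^ 2 * (5 * n - 2)) /
    (2 * (4 * n - 1)) * (4 * n).choose (2 * n + e)

theorem cubeGapSum_eq_sub {n : ℕ} (hn : n ≠ 0) (e : ℕ) :
    cubeGapSum n e = cubeGapPrimitive n e - cubeGapPrimitive n (e + 1) := by
  obtain ⟨m, rfl⟩ : ∃ m, n = m + 1 := ⟨n - 1, by omega⟩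
  have hA := Nat.cast_choose_mul_succ (R := ℚ) (4 * m + 2) (2 * (m + 1) + e)
  have hB := Nat.cast_choose_mul_succ (R := ℚ) (4 * m + 3) (2 * (m + 1) + e)
  have hD := Nat.cast_choose_succ_right_mul (R := ℚ) (4 * (m + 1)) (2 * (m + 1) + e)
  rw [cubeGapSum_eq, cubeGapPrimitive, cubeGapPrimitive,
    show 4 * (m + 1) - 2 = 4 * m + 2 by omega, show 4 * (m + 1) - 1 = 4 * m + 3 by omega,
    ← add_assoc]
  rw [show 4 * m + 2 + 1 = 4 * m + 3 by omega] at hA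
  rw [show 4 * m + 3 + 1 = 4 * (m + 1) by omega] at hB
  push_cast at hA hB hD ⊢
  -- every binomial coefficient is now a rational multiple of `C(4n, 2n + e)`
  rw [← eq_div_iff (by positivity)] at hA hB hD
  rw [hA, hB, hD, show (4 * ((m : ℚ) + 1) - 1) = 4 * m + 3 by ring]
  field_simp
  ring

theorem sum_range_cubeGapSum {n : ℕ} (hn : n ≠ 0) :
    ∑ d ∈ range (2 * n), cubeGapSum n (d + 1) = cubeGapPrimitive n 1 := by
  simp_rw [cubeGapSum_eq_sub hn]
  rw [sum_range_sub' (fun d => cubeGapPrimitive n (d + 1)), sub_eq_self, cubeGapPrimitive,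
    Nat.choose_eq_zero_of_lt (by omega : 4 * n < 2 * n + (2 * n + 1)), Nat.cast_zero, mul_zero]

theorem two_mul_cubeGapPrimitive_one {n : ℕ} (hn : n ≠ 0) :
    2 * cubeGapPrimitive n 1 =
      4 * (n : ℚ) ^ 2 * (5 * n - 2) / (4 * n - 1) * ((4 * n - 1).choose (2 * n - 1) : ℚ) := by
  obtain ⟨m, rfl⟩ : ∃ m, n = m + 1 := ⟨n - 1, by omega⟩
  have hcentral : (4 * (m + 1)).choose (2 * (m + 1)) = 2 * (4 * m + 3).choose (2 * m + 1) := by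
    rw [show 4 * (m + 1) = 2 * (2 * m + 1) + 1 + 1 by ring,
      show 2 * (m + 1) = 2 * m + 1 + 1 by ring, Nat.choose_succ_succ, Nat.choose_symm_half]
    ring_nf
  have hsucc := Nat.cast_choose_succ_right_mul (R := ℚ) (4 * (m + 1)) (2 * (m + 1))
  rw [hcentral, ← eq_div_iff (by positivity)] at hsucc
  rw [cubeGapPrimitive, hsucc, show 4 * (m + 1) - 1 = 4 * m + 3 by omega,
    show 2 * (m + 1) - 1 = 2 * m + 1 by omega]
  push_cast
  rw [show (4 * ((m : ℚ) + 1) - 1) = 4 * m + 3 by ring]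
  field_simp
  ring

theorem finsum_abs_cube_sub_eq_two_mul_sum_cubeGapSum (n : ℕ) :
    ∑ᶠ i : ℤ, ∑ᶠ j : ℤ,
        ((ichoose (2 * n) (n + i) : ℚ) * (ichoose (2 * n) (n + j) : ℚ)
          * |(i : ℚ) ^ 3 - (j : ℚ) ^ 3|) =
      2 * ∑ d ∈ range (2 * n), cubeGapSum n (d + 1) := by
  rw [finsum_finsum_ichoose_mul_ichoose, sum_range_sum_range_eq_two_mul_sum_Ico
      (fun k l => by rw [abs_sub_comm]; ring) (fun k => by simp),
    sum_range_sum_Ico_eq_sum_range_sum_range_add fun k l hl => by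
      simp [Nat.choose_eq_zero_of_lt hl]]
  refine congrArg _ (sum_congr rfl fun d _ => sum_congr rfl fun k _ => ?_)
  have hmono : ((k : ℚ) - n) ^ 3 ≤ ((k : ℚ) + (d + 1 : ℕ) - n) ^ 3 :=
    (Odd.pow_le_pow (by decide)).2 (by simp; linarith)
  push_cast at hmono ⊢
  rw [abs_sub_comm, abs_of_nonneg (sub_nonneg.2 hmono)]

theorem stmt15 (n : ℕ) :
    ∑ᶠ i : ℤ, ∑ᶠ j : ℤ,
        ((ichoose (2 * n) (n + i) : ℚ) * (ichoose (2 * n) (n + j) : ℚ)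
          * |(i : ℚ) ^ 3 - (j : ℚ) ^ 3|)
      = 4 * (n : ℚ) ^ 2 * (5 * n - 2) / (4 * n - 1)
          * ((4 * n - 1).choose (2 * n - 1) : ℚ) := by
  rw [finsum_abs_cube_sub_eq_two_mul_sum_cubeGapSum]
  rcases eq_or_ne n 0 with rfl | hn
  · simp
  · rw [sum_range_cubeGapSum hn, two_mul_cubeGapPrimitive_one hn]
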